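/- Let e be a finite Borel measure on [0, ∞) and let α > 1. Suppose there exists C > 0 such that for all δ > 0, ∫_{[0,δ]} λ^{−1} de(λ) ≤ C δ^{α − 1} (this forces e({0}) = 0). Then there exists C′ > 0 such that for all t > 0: ∫ (1 − e^{−λ t}) / (λ² t) de(λ) ≤ C′ / ψ_α(t), where ψ_α(t) = t^{α−1} if 1 < α < 2, ψ_α(t) = t / max(1, ln t) if α = 2, and ψ_α(t) = t if α > 2. -/

import Mathlib

open MeasureTheory ENNReal
open scoped ENNReal

/-- `ψ_α(t)`: `t^{α-1}` if `α < 2`, `t/ln_+ t` if `α = 2`, `t` if `α > 2`. -/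
noncomputable def psi (α t : ℝ) : ℝ :=
  if α < 2 then t ^ (α - 1) else if α = 2 then t / max 1 (Real.log t) else t

/-!
Bound the integrand by `λ⁻¹` on `[0, δ]` and by `(λ² t)⁻¹` on `(δ, ∞)`, then take `δ = 1/t`.
On a dyadic shell `[b/2, b]` the hypothesis gives
`∫ λ⁻² de ≤ (2/b) ∫_{[0,b]} λ⁻¹ de ≤ 2C b^{α-2}`, so the tail `∫_{(δ,∞)} λ⁻² de` is a geometric
sum of shells. For `α < 2` it is a constant times its first term, `δ^{α-2}`. For `α > 2`
the shells below `1` have a bounded sum, so `∫_{(0,∞)} λ⁻² de < ∞` and one may take `δ = 0`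
(the hypothesis forces `e {0} = 0`). For `α = 2` each of the `log₂ t` shells between `1/t`
and `1` contributes `2C`. Above `1` the integrand `λ⁻²` is at most `1`.
-/

open Set

section Integrand

variable {t l : ℝ}

lemma one_sub_exp_div_nonpos (ht : 0 < t) (hl : l ≤ 0) :
    (1 - Real.exp (-l * t)) / (l ^ 2 * t) ≤ 0 :=
  div_nonpos_of_nonpos_of_nonneg (sub_nonpos.2 (Real.one_le_exp (by nlinarith))) (by positivity)

lemma one_sub_exp_div_le_inv (ht : 0 < t) (hl : 0 < l) :
    (1 - Real.exp (-l * t)) / (l ^ 2 * t) ≤ l⁻¹ := by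
  rw [div_le_iff₀ (by positivity)]
  calc 1 - Real.exp (-l * t) ≤ l * t := by linarith [Real.add_one_le_exp (-l * t)]
    _ = l⁻¹ * (l ^ 2 * t) := by field_simp

lemma one_sub_exp_div_le_inv_mul (ht : 0 < t) (hl : 0 < l) :
    (1 - Real.exp (-l * t)) / (l ^ 2 * t) ≤ (l ^ 2 * t)⁻¹ := by
  rw [div_eq_mul_inv]
  exact mul_le_of_le_one_left (by positivity) (by linarith [Real.exp_pos (-l * t)])

lemma ofReal_one_sub_exp_div_le_indicator (ht : 0 < t) (δ : ℝ) :
    ENNReal.ofReal ((1 - Real.exp (-l * t)) / (l ^ 2 * t)) ≤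
      (Icc 0 δ).indicator (fun l => (ENNReal.ofReal l)⁻¹) l +
        (Ioi δ).indicator (fun l => (ENNReal.ofReal t)⁻¹ * (ENNReal.ofReal l)⁻¹ ^ 2) l := by
  rcases le_or_gt l 0 with hl | hl
  · rw [ENNReal.ofReal_eq_zero.2 (one_sub_exp_div_nonpos ht hl)]
    exact bot_le
  rcases le_or_gt l δ with hlδ | hlδ
  · rw [indicator_of_mem (show l ∈ Icc 0 δ from ⟨hl.le, hlδ⟩), ← ENNReal.ofReal_inv_of_pos hl]
    exact le_add_right (ENNReal.ofReal_le_ofReal (one_sub_exp_div_le_inv ht hl))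
  · rw [indicator_of_mem (show l ∈ Ioi δ from hlδ)]
    refine le_add_left ((ENNReal.ofReal_le_ofReal (one_sub_exp_div_le_inv_mul ht hl)).trans_eq ?_)
    rw [ENNReal.ofReal_inv_of_pos (by positivity), ENNReal.ofReal_mul (by positivity),
      ENNReal.ofReal_pow hl.le, ENNReal.mul_inv (by simp) (by simp), ENNReal.inv_pow, mul_comm]

end Integrand

lemma integral_le_toReal_lintegral_ofReal {X : Type*} [MeasurableSpace X] {μ : Measure X}
    (f : X → ℝ) : ∫ x, f x ∂μ ≤ (∫⁻ x, ENNReal.ofReal (f x) ∂μ).toReal := by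
  by_cases hf : Integrable f μ
  · rw [integral_eq_lintegral_pos_part_sub_lintegral_neg_part hf]
    exact sub_le_self _ ENNReal.toReal_nonneg
  · rw [integral_undef hf]
    exact ENNReal.toReal_nonneg

lemma integral_one_sub_exp_div_le (e : Measure ℝ) {t δ A B : ℝ} (ht : 0 < t) (hA : 0 ≤ A)
    (hB : 0 ≤ B) (hhead : ∫⁻ l in Icc 0 δ, (ENNReal.ofReal l)⁻¹ ∂e ≤ ENNReal.ofReal A)
    (htail : ∫⁻ l in Ioi δ, (ENNReal.ofReal l)⁻¹ ^ 2 ∂e ≤ ENNReal.ofReal B) :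
    ∫ l, (1 - Real.exp (-l * t)) / (l ^ 2 * t) ∂e ≤ A + B / t := by
  refine (integral_le_toReal_lintegral_ofReal _).trans
    (ENNReal.toReal_le_of_le_ofReal (by positivity) ?_)
  calc ∫⁻ l, ENNReal.ofReal ((1 - Real.exp (-l * t)) / (l ^ 2 * t)) ∂e
      ≤ ∫⁻ l, ((Icc 0 δ).indicator (fun l => (ENNReal.ofReal l)⁻¹) l +
          (Ioi δ).indicator (fun l => (ENNReal.ofReal t)⁻¹ * (ENNReal.ofReal l)⁻¹ ^ 2) l) ∂e :=
        lintegral_mono fun l => ofReal_one_sub_exp_div_le_indicator ht δ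
    _ = (∫⁻ l in Icc 0 δ, (ENNReal.ofReal l)⁻¹ ∂e) +
          (ENNReal.ofReal t)⁻¹ * ∫⁻ l in Ioi δ, (ENNReal.ofReal l)⁻¹ ^ 2 ∂e := by
        rw [lintegral_add_left ((by fun_prop : Measurable _).indicator measurableSet_Icc),
          lintegral_indicator measurableSet_Icc, lintegral_indicator measurableSet_Ioi,
          lintegral_const_mul _ (by fun_prop)]
    _ ≤ ENNReal.ofReal A + (ENNReal.ofReal t)⁻¹ * ENNReal.ofReal B := by gcongr
    _ = ENNReal.ofReal (A + B / t) := by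
        rw [ENNReal.ofReal_add hA (by positivity), div_eq_inv_mul,
          ENNReal.ofReal_mul (by positivity), ENNReal.ofReal_inv_of_pos ht]

lemma tsum_ofReal_mul_rpow_geometric {c a q s : ℝ} (hc : 0 ≤ c) (ha : 0 ≤ a) (hq : 0 ≤ q)
    (hqs : q ^ s < 1) :
    ∑' k : ℕ, ENNReal.ofReal (c * (a * q ^ k) ^ s) = ENNReal.ofReal (c * a ^ s / (1 - q ^ s)) := by
  have hterm : ∀ k : ℕ, c * (a * q ^ k) ^ s = c * a ^ s * (q ^ s) ^ k := fun k => by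
    rw [Real.mul_rpow ha (by positivity), ← Real.rpow_pow_comm hq, mul_assoc]
  have hgeom := summable_geometric_of_lt_one (by positivity) hqs
  simp_rw [hterm]
  rw [← ENNReal.ofReal_tsum_of_nonneg (fun k => by positivity) (hgeom.mul_left _),
    tsum_mul_left, tsum_geometric_of_lt_one (by positivity) hqs, div_eq_mul_inv]

lemma Ioi_subset_iUnion_Icc_two_pow {δ : ℝ} (hδ : 0 < δ) :
    Ioi δ ⊆ ⋃ k : ℕ, Icc (2 * δ * 2 ^ k / 2) (2 * δ * 2 ^ k) := by
  intro l hl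
  obtain ⟨k, hk, hk'⟩ :=
    exists_nat_pow_near ((one_le_div hδ).2 (le_of_lt hl)) (by norm_num : (1 : ℝ) < 2)
  rw [le_div_iff₀ hδ] at hk
  rw [div_lt_iff₀ hδ, pow_succ] at hk'
  exact mem_iUnion.2 ⟨k, by linarith, by linarith⟩

lemma exists_mem_Icc_half_pow {l b : ℝ} (hl : l ∈ Ioc 0 b) :
    ∃ k : ℕ, b * 2⁻¹ ^ (k + 1) < l ∧ l ≤ b * 2⁻¹ ^ k := by
  have hb : 0 < b := hl.1.trans_le hl.2
  obtain ⟨k, hk, hk'⟩ := exists_nat_pow_near_of_lt_one (div_pos hl.1 hb)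
    ((div_le_one hb).2 hl.2) (by norm_num : (0 : ℝ) < 2⁻¹) (by norm_num)
  rw [lt_div_iff₀ hb, mul_comm] at hk
  rw [div_le_iff₀ hb, mul_comm] at hk'
  exact ⟨k, hk, hk'⟩

lemma Ioc_subset_iUnion_Icc_half_pow (b : ℝ) :
    Ioc 0 b ⊆ ⋃ k : ℕ, Icc (b * 2⁻¹ ^ k / 2) (b * 2⁻¹ ^ k) := by
  intro l hl
  obtain ⟨k, hk, hk'⟩ := exists_mem_Icc_half_pow hl
  rw [pow_succ] at hk
  exact mem_iUnion.2 ⟨k, by linarith, hk'⟩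

lemma Ioc_subset_iUnion_fin_Icc_half_pow {δ b : ℝ} (hδ : 0 < δ) {n : ℕ}
    (hn : b * 2⁻¹ ^ n ≤ δ) :
    Ioc δ b ⊆ ⋃ k : Fin n, Icc (b * 2⁻¹ ^ (k : ℕ) / 2) (b * 2⁻¹ ^ (k : ℕ)) := by
  intro l hl
  obtain ⟨k, hk, hk'⟩ := exists_mem_Icc_half_pow ⟨hδ.trans hl.1, hl.2⟩
  have hb : 0 < b := hδ.trans (hl.1.trans_le hl.2)
  have hkn : k < n := by
    rw [← pow_lt_pow_iff_right_of_lt_one₀ (by norm_num : (0 : ℝ) < 2⁻¹) (by norm_num),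
      ← mul_lt_mul_iff_right₀ hb]
    linarith [hl.1]
  rw [pow_succ] at hk
  exact mem_iUnion.2 ⟨⟨k, hkn⟩, by dsimp only; linarith, hk'⟩

lemma setLIntegral_inv_sq_Ioi_le_add (e : Measure ℝ) {δ : ℝ} (hδ : δ ≤ 1) :
    ∫⁻ l in Ioi δ, (ENNReal.ofReal l)⁻¹ ^ 2 ∂e ≤
      (∫⁻ l in Ioc δ 1, (ENNReal.ofReal l)⁻¹ ^ 2 ∂e) + e univ := by
  have hfar : ∫⁻ l in Ioi 1, (ENNReal.ofReal l)⁻¹ ^ 2 ∂e ≤ e univ := by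
    refine (setLIntegral_mono measurable_const fun l hl => ?_).trans
      ((setLIntegral_one _).trans_le (measure_mono (subset_univ _)))
    exact pow_le_one₀ bot_le (ENNReal.inv_le_one.2 (ENNReal.one_le_ofReal.2 (le_of_lt hl)))
  rw [← Ioc_union_Ioi_eq_Ioi hδ]
  exact (lintegral_union_le _ _ _).trans (add_le_add_right hfar _)

def InvIntegralBound (e : Measure ℝ) (α C : ℝ) : Prop :=
  ∀ δ : ℝ, 0 < δ → ∫⁻ l in Icc (0 : ℝ) δ, (ENNReal.ofReal l)⁻¹ ∂e ≤ ENNReal.ofReal (C * δ ^ (α - 1))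

namespace InvIntegralBound

variable {e : Measure ℝ} {α C : ℝ}

lemma measure_zero (h : InvIntegralBound e α C) : e {0} = 0 := by
  have hfin : ∫⁻ l in {0}, (ENNReal.ofReal l)⁻¹ ∂e ≠ ⊤ :=
    ((lintegral_mono_set (singleton_subset_iff.2 (left_mem_Icc.2 zero_le_one))).trans
      (h 1 one_pos)).trans_lt ENNReal.ofReal_lt_top |>.ne
  by_contra h0
  exact hfin (by simp [h0])

lemma setLIntegral_inv_sq_Icc_half_le (h : InvIntegralBound e α C) {b : ℝ} (hb : 0 < b) :
    ∫⁻ l in Icc (b / 2) b, (ENNReal.ofReal l)⁻¹ ^ 2 ∂e ≤ ENNReal.ofReal (2 * C * b ^ (α - 2)) := by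
  have hpt : ∀ l ∈ Icc (b / 2) b,
      (ENNReal.ofReal l)⁻¹ ^ 2 ≤ ENNReal.ofReal (2 / b) * (ENNReal.ofReal l)⁻¹ := by
    intro l hl
    have hl0 : 0 < l := by linarith [hl.1]
    rw [sq, ← ENNReal.ofReal_inv_of_pos hl0]
    gcongr
    rw [inv_le_comm₀ hl0 (by positivity), inv_div]
    exact hl.1
  calc ∫⁻ l in Icc (b / 2) b, (ENNReal.ofReal l)⁻¹ ^ 2 ∂e
      ≤ ∫⁻ l in Icc (b / 2) b, ENNReal.ofReal (2 / b) * (ENNReal.ofReal l)⁻¹ ∂e :=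
        setLIntegral_mono (by fun_prop) hpt
    _ = ENNReal.ofReal (2 / b) * ∫⁻ l in Icc (b / 2) b, (ENNReal.ofReal l)⁻¹ ∂e :=
        lintegral_const_mul _ (by fun_prop)
    _ ≤ ENNReal.ofReal (2 / b) * ∫⁻ l in Icc 0 b, (ENNReal.ofReal l)⁻¹ ∂e := by
        gcongr
        positivity
    _ ≤ ENNReal.ofReal (2 / b) * ENNReal.ofReal (C * b ^ (α - 1)) := by gcongr; exact h b hb
    _ = ENNReal.ofReal (2 * C * b ^ (α - 2)) := by
        rw [← ENNReal.ofReal_mul (by positivity), show α - 1 = α - 2 + 1 by ring,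
          Real.rpow_add_one hb.ne']
        field_simp

lemma setLIntegral_inv_sq_le_tsum {ι : Type*} [Countable ι] (h : InvIntegralBound e α C)
    {s : Set ℝ} {b : ι → ℝ} (hb : ∀ i, 0 < b i) (hs : s ⊆ ⋃ i, Icc (b i / 2) (b i)) :
    ∫⁻ l in s, (ENNReal.ofReal l)⁻¹ ^ 2 ∂e ≤ ∑' i, ENNReal.ofReal (2 * C * b i ^ (α - 2)) :=
  calc ∫⁻ l in s, (ENNReal.ofReal l)⁻¹ ^ 2 ∂e
      ≤ ∫⁻ l in ⋃ i, Icc (b i / 2) (b i), (ENNReal.ofReal l)⁻¹ ^ 2 ∂e := lintegral_mono_set hs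
    _ ≤ ∑' i, ∫⁻ l in Icc (b i / 2) (b i), (ENNReal.ofReal l)⁻¹ ^ 2 ∂e := lintegral_iUnion_le _ _
    _ ≤ ∑' i, ENNReal.ofReal (2 * C * b i ^ (α - 2)) :=
        ENNReal.tsum_le_tsum fun i => h.setLIntegral_inv_sq_Icc_half_le (hb i)

lemma setLIntegral_inv_sq_Ioi_le_of_lt_two (h : InvIntegralBound e α C) (hC : 0 ≤ C)
    (hα : α < 2) {δ : ℝ} (hδ : 0 < δ) :
    ∫⁻ l in Ioi δ, (ENNReal.ofReal l)⁻¹ ^ 2 ∂e ≤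
      ENNReal.ofReal (2 * C * (2 * δ) ^ (α - 2) / (1 - 2 ^ (α - 2))) :=
  (h.setLIntegral_inv_sq_le_tsum (fun k => by positivity)
    (Ioi_subset_iUnion_Icc_two_pow hδ)).trans_eq
    (tsum_ofReal_mul_rpow_geometric (by positivity) (by positivity) zero_le_two
      (Real.rpow_lt_one_of_one_lt_of_neg one_lt_two (by linarith)))

lemma setLIntegral_inv_sq_Ioi_zero_le_of_two_lt (h : InvIntegralBound e α C) (hC : 0 ≤ C)
    (hα : 2 < α) :
    ∫⁻ l in Ioi 0, (ENNReal.ofReal l)⁻¹ ^ 2 ∂e ≤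
      ENNReal.ofReal (2 * C / (1 - 2⁻¹ ^ (α - 2))) + e univ := by
  refine (setLIntegral_inv_sq_Ioi_le_add e zero_le_one).trans (add_le_add_left ?_ _)
  refine (h.setLIntegral_inv_sq_le_tsum (fun k => by positivity)
    (Ioc_subset_iUnion_Icc_half_pow 1)).trans_eq ?_
  rw [tsum_ofReal_mul_rpow_geometric (by positivity) zero_le_one (by norm_num)
    (Real.rpow_lt_one (by norm_num) (by norm_num) (by linarith)), Real.one_rpow, mul_one]

lemma setLIntegral_inv_sq_Ioi_le_of_eq_two (h : InvIntegralBound e 2 C) {δ : ℝ} (hδ : 0 < δ)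
    (hδ1 : δ ≤ 1) {n : ℕ} (hn : 2⁻¹ ^ n ≤ δ) :
    ∫⁻ l in Ioi δ, (ENNReal.ofReal l)⁻¹ ^ 2 ∂e ≤ ENNReal.ofReal (2 * C * n) + e univ := by
  refine (setLIntegral_inv_sq_Ioi_le_add e hδ1).trans (add_le_add_left ?_ _)
  refine (h.setLIntegral_inv_sq_le_tsum (fun k => by positivity)
    (Ioc_subset_iUnion_fin_Icc_half_pow hδ (by rwa [one_mul]))).trans_eq ?_
  simp [tsum_fintype, mul_comm]

theorem exists_integral_le_of_lt_two (h : InvIntegralBound e α C) (hC : 0 < C) (hα : α < 2) :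
    ∃ C' : ℝ, 0 < C' ∧ ∀ t : ℝ, 0 < t →
      ∫ l, (1 - Real.exp (-l * t)) / (l ^ 2 * t) ∂e ≤ C' / t ^ (α - 1) := by
  have hr : 0 < 1 - (2 : ℝ) ^ (α - 2) :=
    sub_pos.2 (Real.rpow_lt_one_of_one_lt_of_neg one_lt_two (by linarith))
  refine ⟨C + 2 * C * 2 ^ (α - 2) / (1 - 2 ^ (α - 2)), by positivity, fun t ht => ?_⟩
  have hδ : 0 < t⁻¹ := inv_pos.2 ht
  refine (integral_one_sub_exp_div_le e ht (by positivity) (by positivity) (h t⁻¹ hδ)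
    (h.setLIntegral_inv_sq_Ioi_le_of_lt_two hC.le hα hδ)).trans_eq ?_
  have htα : 0 < t ^ (α - 2) := by positivity
  rw [Real.mul_rpow zero_le_two hδ.le, Real.inv_rpow ht.le, Real.inv_rpow ht.le,
    show α - 1 = α - 2 + 1 by ring, Real.rpow_add_one ht.ne']
  field_simp

theorem exists_integral_le_of_two_lt [IsFiniteMeasure e] (h : InvIntegralBound e α C)
    (hC : 0 < C) (hα : 2 < α) :
    ∃ C' : ℝ, 0 < C' ∧ ∀ t : ℝ, 0 < t →
      ∫ l, (1 - Real.exp (-l * t)) / (l ^ 2 * t) ∂e ≤ C' / t := by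
  have hq : 0 < 1 - (2⁻¹ : ℝ) ^ (α - 2) :=
    sub_pos.2 (Real.rpow_lt_one (by norm_num) (by norm_num) (by linarith))
  set K := 2 * C / (1 - 2⁻¹ ^ (α - 2)) + (e univ).toReal
  have hK : 0 < K := by positivity
  refine ⟨K, hK, fun t ht => ?_⟩
  have hhead : ∫⁻ l in Icc 0 0, (ENNReal.ofReal l)⁻¹ ∂e ≤ ENNReal.ofReal 0 := by
    simp [h.measure_zero]
  have htail : ∫⁻ l in Ioi 0, (ENNReal.ofReal l)⁻¹ ^ 2 ∂e ≤ ENNReal.ofReal K := by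
    rw [ENNReal.ofReal_add (by positivity) ENNReal.toReal_nonneg,
      ENNReal.ofReal_toReal (measure_ne_top e univ)]
    exact h.setLIntegral_inv_sq_Ioi_zero_le_of_two_lt hC.le hα
  simpa using integral_one_sub_exp_div_le e ht le_rfl hK.le hhead htail

lemma integral_le_of_eq_two [IsFiniteMeasure e] (h : InvIntegralBound e 2 C) (hC : 0 ≤ C)
    {t δ : ℝ} (ht : 0 < t) (hδ : 0 < δ) (hδ1 : δ ≤ 1) {n : ℕ} (hn : 2⁻¹ ^ n ≤ δ) :
    ∫ l, (1 - Real.exp (-l * t)) / (l ^ 2 * t) ∂e ≤ C * δ + (2 * C * n + (e univ).toReal) / t := by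
  have hhead := h δ hδ
  norm_num at hhead
  refine integral_one_sub_exp_div_le e ht (by positivity) (by positivity) hhead ?_
  rw [ENNReal.ofReal_add (by positivity) ENNReal.toReal_nonneg,
    ENNReal.ofReal_toReal (measure_ne_top e univ)]
  exact h.setLIntegral_inv_sq_Ioi_le_of_eq_two hδ hδ1 hn

theorem exists_integral_le_of_eq_two [IsFiniteMeasure e] (h : InvIntegralBound e 2 C)
    (hC : 0 < C) :
    ∃ C' : ℝ, 0 < C' ∧ ∀ t : ℝ, 0 < t →
      ∫ l, (1 - Real.exp (-l * t)) / (l ^ 2 * t) ∂e ≤ C' / (t / max 1 (Real.log t)) := by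
  set M := (e univ).toReal
  have hM : 0 ≤ M := ENNReal.toReal_nonneg
  have hlog2 : 0 < Real.log 2 := Real.log_pos one_lt_two
  refine ⟨3 * C + M + 2 * C / Real.log 2, by positivity, fun t ht => ?_⟩
  rcases le_or_gt t 1 with ht1 | ht1
  · have hL : max 1 (Real.log t) = 1 :=
      max_eq_left ((Real.log_nonpos ht.le ht1).trans zero_le_one)
    refine (h.integral_le_of_eq_two hC.le ht one_pos le_rfl (n := 0) (by simp)).trans ?_
    rw [hL, div_one, Nat.cast_zero, mul_zero, zero_add, mul_one, le_div_iff₀ ht, add_mul,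
      div_mul_cancel₀ _ ht.ne']
    nlinarith [mul_le_of_le_one_right hC.le ht1, div_pos (by positivity : 0 < 2 * C) hlog2]
  · obtain ⟨m, hm, hm'⟩ := exists_nat_pow_near ht1.le (by norm_num : (1 : ℝ) < 2)
    have hn : (2⁻¹ : ℝ) ^ (m + 1) ≤ t⁻¹ := by
      rw [inv_pow]
      exact inv_anti₀ ht hm'.le
    have hm_log : (m : ℝ) ≤ max 1 (Real.log t) / Real.log 2 := by
      rw [le_div_iff₀ hlog2, ← Real.log_pow]
      exact (Real.log_le_log (by positivity) hm).trans (le_max_right _ _)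
    refine (h.integral_le_of_eq_two hC.le ht (inv_pos.2 ht) (inv_le_one_of_one_le₀ ht1.le)
      hn).trans ?_
    rw [div_div_eq_mul_div, show C * t⁻¹ + (2 * C * ((m + 1 : ℕ) : ℝ) + M) / t =
      (3 * C + M + 2 * C * m) / t by push_cast; field_simp; ring]
    gcongr
    have hL : 1 ≤ max 1 (Real.log t) := le_max_left _ _
    calc 3 * C + M + 2 * C * m
        ≤ (3 * C + M) * max 1 (Real.log t) + 2 * C * (max 1 (Real.log t) / Real.log 2) := by
          gcongr
          exact le_mul_of_one_le_right (by positivity) hL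
      _ = (3 * C + M + 2 * C / Real.log 2) * max 1 (Real.log t) := by ring

end InvIntegralBound

theorem xi_variance_decay_general
    (e : Measure ℝ) [IsFiniteMeasure e]
    (α : ℝ) (C : ℝ) (hC : 0 < C)
    (h : ∀ δ : ℝ, 0 < δ →
      ∫⁻ l in Set.Icc (0 : ℝ) δ, (ENNReal.ofReal l)⁻¹ ∂e ≤
        ENNReal.ofReal (C * δ ^ (α - 1))) :
    ∃ C' : ℝ, 0 < C' ∧ ∀ t : ℝ, 0 < t →
      ∫ l, (1 - Real.exp (-l * t)) / (l ^ 2 * t) ∂e ≤ C' / psi α t := by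
  rcases lt_trichotomy α 2 with hα | rfl | hα
  · simpa only [psi, if_pos hα] using InvIntegralBound.exists_integral_le_of_lt_two h hC hα
  · simpa [psi] using InvIntegralBound.exists_integral_le_of_eq_two h hC
  · simpa only [psi, if_neg hα.not_gt, if_neg hα.ne'] using
      InvIntegralBound.exists_integral_le_of_two_lt h hC hα

/-- If the spectral measure satisfies `∫_{[0,δ]} λ⁻¹ de(λ) ≤ C δ^{α-1}` for all `δ > 0`
(which forces `e({0}) = 0`), then `∫ (1 - e^{-λt})/(λ²t) de(λ) ≤ C'/ψ_α(t)` for all `t > 0`. -/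
theorem xi_variance_decay
    (e : Measure ℝ) [IsFiniteMeasure e] (he : e (Set.Iio 0) = 0)
    (α : ℝ) (hα : 1 < α) (C : ℝ) (hC : 0 < C)
    (h : ∀ δ : ℝ, 0 < δ →
      ∫⁻ l in Set.Icc (0 : ℝ) δ, (ENNReal.ofReal l)⁻¹ ∂e ≤
        ENNReal.ofReal (C * δ ^ (α - 1))) :
    ∃ C' : ℝ, 0 < C' ∧ ∀ t : ℝ, 0 < t →
      ∫ l, (1 - Real.exp (-l * t)) / (l ^ 2 * t) ∂e ≤ C' / psi α t :=
  xi_variance_decay_general e α C hC h
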